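/- Under the setting of bounded per-step costs and almost-sure absorption within N steps, for any two policies π₁, π₂ over a finite policy class, if ρ(b; π₁) < ρ(b; π₂) then there exists J₀ such that for all J^F > J₀, J_{J^F}(b; π₁) < J_{J^F}(b; π₂). Consequently, any policy minimizing lim_{J^F→∞} J_{J^F}(b; π)/J^F over a finite policy class also minimizes the risk ρ(b; π). -/

import Mathlib

open Filter Topology

/-- Horizon-`n` expected total undiscounted cost with terminal failure cost `JF`
(cost `0` on goal states `G`, `JF` upon absorption in failure states `F`). -/
noncomputable def valIter {B : Type*} [Fintype B] [DecidableEq B]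
    (P : B → B → ℝ) (c : B → ℝ) (G F : Finset B) (JF : ℝ) : ℕ → B → ℝ
  | 0, b => if b ∈ F then JF else 0
  | n + 1, b =>
      if b ∈ F then JF else if b ∈ G then 0
      else c b + ∑ b' : B, P b b' * valIter P c G F JF n b'

/-- Probability of absorption in `F` within `n` steps. -/
noncomputable def riskIter {B : Type*} [Fintype B] [DecidableEq B]
    (P : B → B → ℝ) (G F : Finset B) : ℕ → B → ℝ
  | 0, b => if b ∈ F then 1 else 0
  | n + 1, b =>
      if b ∈ F then 1 else if b ∈ G then 0 else ∑ b' : B, P b b' * riskIter P G F n b'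

/-- Probability of reaching `A` within `n` steps. -/
noncomputable def reachIter {B : Type*} [Fintype B] [DecidableEq B]
    (P : B → B → ℝ) (A : Finset B) : ℕ → B → ℝ
  | 0, b => if b ∈ A then 1 else 0
  | n + 1, b => if b ∈ A then 1 else ∑ b' : B, P b b' * reachIter P A n b'

/-!
Since the failure cost is paid only on absorption in `F`, the cost is affine in the failure cost:
`J_{J^F}(b; π) = J_0(b; π) + ρ(b; π) J^F`. Hence for large `J^F` the policy with the smaller
risk is strictly cheaper, and `J_{J^F}(b; π) / J^F → ρ(b; π)`, so minimizing the limit is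
minimizing the risk.
-/

section Affine

variable {𝕜 : Type*} [Field 𝕜] [LinearOrder 𝕜] [IsStrictOrderedRing 𝕜]

theorem exists_forall_lt_affine_lt_of_lt {a₁ a₂ : 𝕜} (h : a₁ < a₂) (b₁ b₂ : 𝕜) :
    ∃ x₀, ∀ x, x₀ < x → a₁ * x + b₁ < a₂ * x + b₂ := by
  refine ⟨(b₁ - b₂) / (a₂ - a₁), fun x hx => ?_⟩
  rw [div_lt_iff₀ (sub_pos.2 h)] at hx
  linarith

theorem tendsto_affine_div_atTop [TopologicalSpace 𝕜] [OrderTopology 𝕜] (a b : 𝕜) :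
    Tendsto (fun x => (a * x + b) / x) atTop (𝓝 a) := by
  have hsplit : ∀ᶠ x in atTop, a + b / x = (a * x + b) / x := by
    filter_upwards [eventually_ne_atTop 0] with x hx
    field_simp
  simpa using (tendsto_const_nhds.add (tendsto_id.const_div_atTop b)).congr' hsplit

end Affine

theorem valIter_eq_riskIter_mul_add {B : Type*} [Fintype B] [DecidableEq B]
    (P : B → B → ℝ) (c : B → ℝ) (G F : Finset B) (JF : ℝ) (n : ℕ) (b : B) :
    valIter P c G F JF n b = riskIter P G F n b * JF + valIter P c G F 0 n b := by
  induction n generalizing b with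
  | zero => by_cases hF : b ∈ F <;> simp [valIter, riskIter, hF]
  | succ n ih =>
    by_cases hF : b ∈ F
    · simp [valIter, riskIter, hF]
    by_cases hG : b ∈ G
    · simp [valIter, riskIter, hF, hG]
    simp only [valIter, riskIter, if_neg hF, if_neg hG, ih, mul_add, Finset.sum_add_distrib,
      Finset.sum_mul, mul_assoc]
    ring

theorem risk_ordering_and_limit_minimizer_general
    {B : Type*} [Fintype B] [DecidableEq B]
    {Pol : Type*}
    (P : Pol → B → B → ℝ) (c : Pol → B → ℝ) (G F : Finset B) (N : ℕ)
    (b : B) :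
    -- (i) strict risk ordering implies strict cost ordering for all large `J^F`
    (∀ π₁ π₂ : Pol, riskIter (P π₁) G F N b < riskIter (P π₂) G F N b →
      ∃ J₀ : ℝ, ∀ JF : ℝ, J₀ < JF →
        valIter (P π₁) (c π₁) G F JF N b < valIter (P π₂) (c π₂) G F JF N b) ∧
    -- (ii) any policy minimizing lim_{J^F→∞} J_{J^F}(b)/J^F also minimizes the risk
    (∀ (L : Pol → ℝ),
      (∀ π, Tendsto (fun JF : ℝ => valIter (P π) (c π) G F JF N b / JF) atTop
        (nhds (L π))) →
      ∀ π₀ : Pol, (∀ π, L π₀ ≤ L π) →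
        ∀ π, riskIter (P π₀) G F N b ≤ riskIter (P π) G F N b) := by
  have hval : ∀ π JF, valIter (P π) (c π) G F JF N b =
      riskIter (P π) G F N b * JF + valIter (P π) (c π) G F 0 N b :=
    fun π JF => valIter_eq_riskIter_mul_add _ _ G F JF N b
  refine ⟨fun π₁ π₂ hrisk => ?_, fun L hL π₀ hmin π => ?_⟩
  · obtain ⟨J₀, hJ₀⟩ := exists_forall_lt_affine_lt_of_lt hrisk _ _
    exact ⟨J₀, fun JF hJF => by rw [hval π₁ JF, hval π₂ JF]; exact hJ₀ JF hJF⟩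
  have hL_eq_risk : ∀ π, L π = riskIter (P π) G F N b := fun π =>
    tendsto_nhds_unique (hL π) ((tendsto_affine_div_atTop _ _).congr fun JF => by rw [hval π JF])
  simpa only [hL_eq_risk] using hmin π

theorem risk_ordering_and_limit_minimizer
    {B : Type*} [Fintype B] [DecidableEq B]
    {Pol : Type*} [Fintype Pol]  -- finite policy class Π
    (P : Pol → B → B → ℝ) (c : Pol → B → ℝ) (G F : Finset B) (N : ℕ) (C : ℝ)
    (hdisj : Disjoint G F)
    (hP0 : ∀ π b b', 0 ≤ P π b b') (hP1 : ∀ π b, ∑ b' : B, P π b b' = 1)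
    (habsG : ∀ π, ∀ g ∈ G, P π g g = 1) (habsF : ∀ π, ∀ f ∈ F, P π f f = 1)
    (hc0 : ∀ π b, 0 ≤ c π b) (hcC : ∀ π b, c π b ≤ C)
    -- almost-sure absorption within `N` steps, under every policy and from every state
    (habsorb : ∀ π b, reachIter (P π) (G ∪ F) N b = 1)
    (b : B) :
    -- (i) strict risk ordering implies strict cost ordering for all large `J^F`
    (∀ π₁ π₂ : Pol, riskIter (P π₁) G F N b < riskIter (P π₂) G F N b →
      ∃ J₀ : ℝ, ∀ JF : ℝ, J₀ < JF →
        valIter (P π₁) (c π₁) G F JF N b < valIter (P π₂) (c π₂) G F JF N b) ∧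
    -- (ii) any policy minimizing lim_{J^F→∞} J_{J^F}(b)/J^F also minimizes the risk
    (∀ (L : Pol → ℝ),
      (∀ π, Tendsto (fun JF : ℝ => valIter (P π) (c π) G F JF N b / JF) atTop
        (nhds (L π))) →
      ∀ π₀ : Pol, (∀ π, L π₀ ≤ L π) →
        ∀ π, riskIter (P π₀) G F N b ≤ riskIter (P π) G F N b) :=
  risk_ordering_and_limit_minimizer_general P c G F N b
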